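/- arXiv:1911.02885 — 2 statements merged into one kernel-verified Lean document; each statement's English description precedes it below -/
import Mathlib

section
/- If Y : ℝ → Matrix (Fin n) (Fin n) ℂ satisfies the matrix ODE Y' = A x * Y for all x, then (det ∘ Y)' x = trace (A x) * det (Y x) for all x (Abel's identity, differential form). -/
/-! The determinant is multilinear in the rows, so the derivative of `det ∘ Y` is the sum over
`i` of the determinants of `Y` with row `i` replaced by row `i` of `Y' = A * Y`. That row is
`∑ k, A i k • Y k`, and since the determinant is alternating only the term `k = i` survives,
leaving `∑ i, A i i * det Y = trace A * det Y`. -/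

attribute [local instance] Matrix.normedAddCommGroup Matrix.normedSpace

namespace Matrix

variable {m : Type*} [Fintype m] [DecidableEq m]

theorem sum_det_updateRow_mul {R : Type*} [CommRing R] (B M : Matrix m m R) :
    ∑ i, (M.updateRow i ((B * M) i)).det = B.trace * M.det := by
  have row_mul (i : m) : (B * M) i = ∑ k, B i k • M k := by
    ext j; simp [mul_apply, Finset.sum_apply]
  rw [trace, Finset.sum_mul]
  exact Finset.sum_congr rfl fun i _ => by rw [row_mul, det_updateRow_sum]; rfl

noncomputable def detContinuousMultilinearMap {𝕜 : Type*} [NontriviallyNormedField 𝕜] :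
    ContinuousMultilinearMap 𝕜 (fun _ : m => m → 𝕜) 𝕜 where
  toMultilinearMap := detRowAlternating.toMultilinearMap
  cont := continuous_id.matrix_det

theorem _root_.HasDerivAt.matrix_det {𝕜 𝕜' : Type*} [NontriviallyNormedField 𝕜]
    [NontriviallyNormedField 𝕜'] [NormedAlgebra 𝕜 𝕜'] {Y : 𝕜 → Matrix m m 𝕜'}
    {Y' : Matrix m m 𝕜'} {x : 𝕜} (hY : HasDerivAt Y Y' x) :
    HasDerivAt (fun t => (Y t).det) (∑ i, ((Y x).updateRow i (Y' i)).det) x := by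
  have hdet := (detContinuousMultilinearMap.hasFDerivAt (Y x)).restrictScalars 𝕜
  exact (hdet.comp_hasDerivAt (f := fun t => (Y t : m → m → 𝕜')) x hY).congr_deriv
    (detContinuousMultilinearMap.linearDeriv_apply (Y x) Y')

end Matrix

theorem abel_identity_diff_general (n : ℕ) (A Y : ℝ → Matrix (Fin n) (Fin n) ℂ)
    (hY : ∀ x : ℝ, HasDerivAt Y (A x * Y x) x) :
    ∀ x : ℝ, HasDerivAt (fun x => (Y x).det) ((A x).trace * (Y x).det) x := fun x =>
  Matrix.sum_det_updateRow_mul (A x) (Y x) ▸ (hY x).matrix_det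

theorem abel_identity_diff (n : ℕ) (A Y : ℝ → Matrix (Fin n) (Fin n) ℂ)
    (hA : Continuous A)
    (hY : ∀ x : ℝ, HasDerivAt Y (A x * Y x) x) :
    ∀ x : ℝ, HasDerivAt (fun x => (Y x).det) ((A x).trace * (Y x).det) x :=
  abel_identity_diff_general n A Y hY
end

section
/- Let J : ℝ → Matrix (Fin n) (Fin n) ℂ be differentiable with J' x = i·c·λ·(σ * J x - J x * σ) + Q x * J x, where λ ∈ ℝ, σᴴ = σ, and (Q x)ᴴ = -(Q x) for all x. If (J x₀)ᴴ * J x₀ = 1 for some x₀, then (J x)ᴴ * J x = 1 for all x (J is unitary for every x). -/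
attribute [local instance] Matrix.normedAddCommGroup Matrix.normedSpace

open Complex Matrix

/-!
Writing `H = i c λ σ`, which is skew-Hermitian because `c λ` is real and `σ` Hermitian, the
equation reads `J' = (H + Q) J - J H` with `H + Q` and `H` skew-Hermitian. For such an equation
`F = Jᴴ J` satisfies `F' = H F - F H`, a linear equation which the constant `1` also solves;
uniqueness of solutions of Lipschitz ODEs then gives `F ≡ 1` once `F x₀ = 1`.
-/

theorem star_mul_add_star_mul_of_mem_skewAdjoint {A : Type*} [Ring A] [StarRing A] {P H : A}
    (hP : P ∈ skewAdjoint A) (hH : H ∈ skewAdjoint A) (J : A) :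
    star (P * J - J * H) * J + star J * (P * J - J * H) = H * (star J * J) - star J * J * H := by
  rw [skewAdjoint.mem_iff] at hP hH
  simp only [star_sub, star_mul, hP, hH]
  noncomm_ring

section NormedRing

variable {A : Type*} [NormedRing A] [NormedAlgebra ℝ A]

theorem eq_of_hasDerivAt_commutator {H C : A} (hC : Commute H C) {F : ℝ → A}
    (hF : ∀ x, HasDerivAt F (H * F x - F x * H) x) {x₀ : ℝ} (h₀ : F x₀ = C) (x : ℝ) :
    F x = C := by
  have hLip : LipschitzWith _ fun X : A => H * X - X * H :=
    (ContinuousLinearMap.mul ℝ A H - (ContinuousLinearMap.mul ℝ A).flip H).lipschitz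
  have hconst : ∀ t : ℝ, HasDerivAt (fun _ => C) (H * C - C * H) t := fun t =>
    (hasDerivAt_const t C).congr_deriv (sub_eq_zero.mpr hC.eq).symm
  exact congrFun (ODE_solution_unique_univ (s := fun _ => .univ) (fun _ => hLip.lipschitzOnWith)
    (fun t => ⟨hF t, trivial⟩) (fun t => ⟨hconst t, trivial⟩) h₀) x

variable [StarRing A] [StarModule ℝ A] [hA : ContinuousStar A]

theorem HasDerivAt.star_mul_self {J : ℝ → A} {J' : A} {x : ℝ} (h : HasDerivAt J J' x) :
    HasDerivAt (fun y => star (J y) * J y) (star J' * J x + star (J x) * J') x :=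
  h.star.mul h

theorem star_mul_self_eq_one_of_hasDerivAt {H : A} (hH : H ∈ skewAdjoint A) {P J : ℝ → A}
    (hP : ∀ x, P x ∈ skewAdjoint A) (hJ : ∀ x, HasDerivAt J (P x * J x - J x * H) x)
    {x₀ : ℝ} (h₀ : star (J x₀) * J x₀ = 1) (x : ℝ) : star (J x) * J x = 1 := by
  refine eq_of_hasDerivAt_commutator (F := fun y => star (J y) * J y) (Commute.one_right H)
    (fun t => ?_) h₀ x
  simpa only [star_mul_add_star_mul_of_mem_skewAdjoint (hP t) hH] using (hJ t).star_mul_self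

end NormedRing

theorem jost_unitary_general (n : ℕ) (c lam : ℝ)
    (σ : Matrix (Fin n) (Fin n) ℂ) (hσ : σᴴ = σ)
    (Q J : ℝ → Matrix (Fin n) (Fin n) ℂ)
    (hQ : ∀ x : ℝ, (Q x)ᴴ = -(Q x))
    (hJ : ∀ x : ℝ, HasDerivAt J
      ((Complex.I * c * lam) • (σ * J x - J x * σ) + Q x * J x) x)
    (x₀ : ℝ) (h₀ : (J x₀)ᴴ * J x₀ = 1) :
    ∀ x : ℝ, (J x)ᴴ * J x = 1 := by
  let : NormedRing (Matrix (Fin n) (Fin n) ℂ) := Matrix.linftyOpNormedRing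
  let : NormedAlgebra ℝ (Matrix (Fin n) (Fin n) ℂ) := Matrix.linftyOpNormedAlgebra
  set H := (Complex.I * c * lam) • σ with hH_def
  have hH : H ∈ skewAdjoint (Matrix (Fin n) (Fin n) ℂ) := by
    rw [skewAdjoint.mem_iff, hH_def, star_smul, star_eq_conjTranspose, hσ]
    simp [← ofReal_mul, mul_assoc]
  have hHQ : ∀ x, H + Q x ∈ skewAdjoint (Matrix (Fin n) (Fin n) ℂ) := fun x =>
    add_mem hH (skewAdjoint.mem_iff.mpr (hQ x))
  have hJ' : ∀ x, HasDerivAt J ((H + Q x) * J x - J x * H) x := fun x =>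
    (hJ x).congr_deriv (by simp only [H, add_mul, smul_mul_assoc, mul_smul_comm, smul_sub]; abel)
  -- The topology of the operator norm is the product topology only up to unfolding
  -- `Matrix.linftyOpNormedRing`, so instance search cannot find `ContinuousStar` by itself.
  exact star_mul_self_eq_one_of_hasDerivAt (hA := instContinuousStarMatrix) hH hHQ hJ' h₀

theorem jost_unitary (n : ℕ) (c lam : ℝ)
    (σ : Matrix (Fin n) (Fin n) ℂ) (hσ : σᴴ = σ)
    (Q J : ℝ → Matrix (Fin n) (Fin n) ℂ)
    (hQcont : Continuous Q)
    (hQ : ∀ x : ℝ, (Q x)ᴴ = -(Q x))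
    (hJ : ∀ x : ℝ, HasDerivAt J
      ((Complex.I * c * lam) • (σ * J x - J x * σ) + Q x * J x) x)
    (x₀ : ℝ) (h₀ : (J x₀)ᴴ * J x₀ = 1) :
    ∀ x : ℝ, (J x)ᴴ * J x = 1 :=
  jost_unitary_general n c lam σ hσ Q J hQ hJ x₀ h₀
end
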